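/- arXiv:0709.0274 — 6 statements merged into one kernel-verified Lean document; each statement's English description precedes it below -/
import Mathlib

section
/- For all u ≥ 0 and all θ ∈ [−π/2, π/2], the cone tangency inequality holds: (cos θ + u)/√(1 + 2u cos θ + u²) ≥ √( log(1 + 2u cos θ + u²) / (log(1 + 2u cos θ + u²) + 1) ), whenever 1 + 2u cos θ + u² > 1. -/
theorem cone_tangency (u θ : ℝ) (hu : 0 ≤ u)
    (hθ : θ ∈ Set.Icc (-(Real.pi / 2)) (Real.pi / 2))
    (hgt : 1 < 1 + 2 * u * Real.cos θ + u ^ 2) :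
    (Real.cos θ + u) / Real.sqrt (1 + 2 * u * Real.cos θ + u ^ 2) ≥
      Real.sqrt (Real.log (1 + 2 * u * Real.cos θ + u ^ 2) /
        (Real.log (1 + 2 * u * Real.cos θ + u ^ 2) + 1)) := by
  set Q : ℝ := 1 + 2 * u * Real.cos θ + u ^ 2 with hQ
  have hc : 0 ≤ Real.cos θ := Real.cos_nonneg_of_mem_Icc hθ
  have hQ0 : 0 < Q := lt_trans one_pos hgt
  have hL : 0 < Real.log Q := Real.log_pos hgt
  have hL1 : Real.log Q ≤ Q - 1 := Real.log_le_sub_one_of_pos hQ0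
  have hs : Real.sin θ ^ 2 + Real.cos θ ^ 2 = 1 := Real.sin_sq_add_cos_sq θ
  have hs1 : Real.sin θ ^ 2 ≤ 1 := Real.sin_sq_le_one θ
  have key : Real.log Q / (Real.log Q + 1) ≤ (Real.cos θ + u) ^ 2 / Q := by
    rw [div_le_div_iff₀ (by linarith) hQ0]
    nlinarith [hs, hs1, hL, hL1, hQ0]
  calc Real.sqrt (Real.log Q / (Real.log Q + 1))
      ≤ Real.sqrt ((Real.cos θ + u) ^ 2 / Q) := Real.sqrt_le_sqrt key
    _ = (Real.cos θ + u) / Real.sqrt Q := by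
        rw [Real.sqrt_div' _ (by positivity), Real.sqrt_sq (by positivity)]
end

section
/- Let w, g, h, Λ be smooth on [0,R] with w(0)=0, w'(0)=1, w,g,Λ > 0 on (0,R], Λ(0)=0, and suppose Λ satisfies (Λwg)' = m(Λ/g)(w' − hw). If w''(r) − w'(r)h(r) − w(r)h'(r) ≥ 0 for all r ∈ [0,R], then for all r ∈ [0,R]: m·(∫₀^r Λ(t)/g(t) dt)·(w'(r) − h(r)w(r)) ≥ Λ(r)·w(r)·g(r). -/
theorem balance_condition_implied (m : ℕ) (hm : 0 < m) (R : ℝ) (hR : 0 < R)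
    (w g h Λ : ℝ → ℝ)
    (hw : ContDiff ℝ (⊤ : ℕ∞) w) (hg : ContDiff ℝ (⊤ : ℕ∞) g) (hh : ContDiff ℝ (⊤ : ℕ∞) h)
    (hΛ : ContDiff ℝ (⊤ : ℕ∞) Λ)
    (hw0 : w 0 = 0) (hw'0 : deriv w 0 = 1) (hΛ0 : Λ 0 = 0)
    (hwpos : ∀ r ∈ Set.Ioc (0:ℝ) R, 0 < w r)
    (hgpos : ∀ r ∈ Set.Icc (0:ℝ) R, 0 < g r)
    (hΛpos : ∀ r ∈ Set.Ioc (0:ℝ) R, 0 < Λ r)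
    (hode : ∀ r ∈ Set.Icc (0:ℝ) R,
      deriv (fun t => Λ t * w t * g t) r =
        (m : ℝ) * (Λ r / g r) * (deriv w r - h r * w r))
    (hbal : ∀ r ∈ Set.Icc (0:ℝ) R,
      deriv (deriv w) r - deriv w r * h r - w r * deriv h r ≥ 0) :
    ∀ r ∈ Set.Icc (0:ℝ) R,
      (m : ℝ) * (∫ t in (0:ℝ)..r, Λ t / g t) * (deriv w r - h r * w r) ≥
        Λ r * w r * g r := by
  set f : ℝ → ℝ := fun t => Λ t / g t with hf
  set I : ℝ → ℝ := fun x => ∫ t in (0:ℝ)..x, f t with hI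
  -- continuity of f on [0,R]
  have hfcont : ContinuousOn f (Set.Icc 0 R) :=
    (hΛ.continuous.continuousOn).div (hg.continuous.continuousOn)
      (fun x hx => (hgpos x hx).ne')
  -- f nonneg on [0,R]
  have hfnonneg : ∀ t ∈ Set.Icc (0:ℝ) R, 0 ≤ f t := by
    intro t ht
    rcases eq_or_lt_of_le ht.1 with h0 | h0
    · simp [hf, ← h0, hΛ0]
    · exact div_nonneg (hΛpos t ⟨h0, ht.2⟩).le (hgpos t ht).le
  -- interval integrability
  have hint : ∀ r ∈ Set.Icc (0:ℝ) R, IntervalIntegrable f MeasureTheory.volume 0 r := by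
    intro r hr
    apply (hfcont.mono ?_).intervalIntegrable
    rw [Set.uIcc_of_le hr.1]
    exact Set.Icc_subset_Icc le_rfl hr.2
  -- derivatives of the auxiliary smooth functions
  have hwd : Differentiable ℝ w := hw.differentiable (by simp)
  have hw'd : Differentiable ℝ (deriv w) := ((contDiff_infty_iff_deriv.mp (hw.of_le (by simp))).2).differentiable (by simp)
  have hhd : Differentiable ℝ h := hh.differentiable (by simp)
  have hΛd : Differentiable ℝ Λ := hΛ.differentiable (by simp)
  have hgd : Differentiable ℝ g := hg.differentiable (by simp)
  set D : ℝ → ℝ :=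
    fun x => (m : ℝ) * I x * (deriv w x - h x * w x) - Λ x * w x * g x with hD
  -- D has nonnegative derivative on the interior
  have key : ∀ x ∈ Set.Ioo (0:ℝ) R,
      HasDerivAt D ((m : ℝ) * I x *
        (deriv (deriv w) x - deriv w x * h x - w x * deriv h x)) x := by
    intro x hx
    have hxIcc : x ∈ Set.Icc (0:ℝ) R := ⟨hx.1.le, hx.2.le⟩
    have hIder : HasDerivAt I (f x) x := by
      apply intervalIntegral.integral_hasDerivAt_right (hint x hxIcc)
      · exact ((hΛ.continuous.measurable.div
          hg.continuous.measurable).stronglyMeasurable).stronglyMeasurableAtFilter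
      · exact (hΛ.continuous.continuousAt).div (hg.continuous.continuousAt)
          (hgpos x hxIcc).ne'
    have h1 : HasDerivAt (fun x => (m : ℝ) * I x * (deriv w x - h x * w x))
        ((m : ℝ) * f x * (deriv w x - h x * w x) +
          (m : ℝ) * I x * (deriv (deriv w) x - (deriv h x * w x + h x * deriv w x))) x := by
      exact ((hIder.const_mul (m : ℝ)).mul
        (((hw'd x).hasDerivAt).sub (((hhd x).hasDerivAt).mul ((hwd x).hasDerivAt))))
    have h2 : HasDerivAt (fun t => Λ t * w t * g t)
        (deriv (fun t => Λ t * w t * g t) x) x :=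
      ((((hΛd x).hasDerivAt).mul ((hwd x).hasDerivAt)).mul ((hgd x).hasDerivAt)).congr_deriv
        (by
          exact (((((hΛd x).hasDerivAt).mul ((hwd x).hasDerivAt)).mul
            ((hgd x).hasDerivAt))).deriv.symm)
    have : HasDerivAt D _ x := h1.sub h2
    convert this using 1
    rw [hode x hxIcc]
    ring
  have hIcont : ContinuousOn I (Set.Icc 0 R) := by
    have := intervalIntegral.continuousOn_primitive_interval
      (μ := MeasureTheory.volume) (f := f) (a := 0) (b := R) ?_
    · rwa [Set.uIcc_of_le hR.le] at this
    · rw [Set.uIcc_of_le hR.le]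
      exact hfcont.integrableOn_compact isCompact_Icc
  have hDcont : ContinuousOn D (Set.Icc 0 R) := by
    apply ContinuousOn.sub
    · exact ((continuousOn_const.mul hIcont).mul
        (((hw'd.continuous.continuousOn).sub
          ((hhd.continuous.continuousOn).mul (hwd.continuous.continuousOn)))))
    · exact ((hΛd.continuous.continuousOn).mul (hwd.continuous.continuousOn)).mul
        (hgd.continuous.continuousOn)
  have hInonneg : ∀ x ∈ Set.Icc (0:ℝ) R, 0 ≤ I x := by
    intro x hxIcc
    apply intervalIntegral.integral_nonneg hxIcc.1
    intro u hu
    exact hfnonneg u ⟨hu.1, hu.2.trans hxIcc.2⟩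
  have hmono : MonotoneOn D (Set.Icc 0 R) := by
    apply monotoneOn_of_deriv_nonneg (convex_Icc 0 R) hDcont
    · intro x hx
      rw [interior_Icc] at hx
      exact ((key x hx).differentiableAt).differentiableWithinAt
    · intro x hx
      rw [interior_Icc] at hx
      rw [(key x hx).deriv]
      have hxIcc : x ∈ Set.Icc (0:ℝ) R := ⟨hx.1.le, hx.2.le⟩
      exact mul_nonneg (mul_nonneg (by positivity) (hInonneg x hxIcc)) (hbal x hxIcc)
  intro r hr
  have h0mem : (0:ℝ) ∈ Set.Icc (0:ℝ) R := ⟨le_rfl, hR.le⟩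
  have := hmono h0mem hr hr.1
  have hD0 : D 0 = 0 := by
    simp [hD, hI, hΛ0]
  rw [hD0] at this
  simpa [hD, ge_iff_le, sub_nonneg, hI, hf] using this
end

section
/- Let ψ be the solution on (0,R] of ψ'(r) = −(1/(g(r)Λ(r)))·∫₀^r Λ(t)/g(t) dt, where Λ, g are smooth positive functions on (0,R]. If the balance condition m(∫₀^r Λ(t)/g(t) dt)(w'(r) − h(r)w(r)) ≥ Λ(r)w(r)g(r) holds and Λ satisfies L ψ = −1 where Lf = f''g² + f'((m−g²)η_w − m h), then ψ''(r) − ψ'(r)·η_w(r) ≥ 0 for all r ∈ (0,R]. -/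
theorem lemYellow (m : ℕ) (hm : 0 < m) (R : ℝ) (hR : 0 < R)
    (w g h Λ ψ : ℝ → ℝ)
    (hwpos : ∀ r ∈ Set.Ioc (0:ℝ) R, 0 < w r)
    (hgpos : ∀ r ∈ Set.Ioc (0:ℝ) R, 0 < g r)
    (hΛpos : ∀ r ∈ Set.Ioc (0:ℝ) R, 0 < Λ r)
    (hψ' : ∀ r ∈ Set.Ioc (0:ℝ) R,
      deriv ψ r = -(1 / (g r * Λ r)) * ∫ t in (0:ℝ)..r, Λ t / g t)
    (hbal : ∀ r ∈ Set.Ioc (0:ℝ) R,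
      (m : ℝ) * (∫ t in (0:ℝ)..r, Λ t / g t) * (deriv w r - h r * w r) ≥
        Λ r * w r * g r)
    (hL : ∀ r ∈ Set.Ioc (0:ℝ) R,
      deriv (deriv ψ) r * g r ^ 2 +
          deriv ψ r * (((m : ℝ) - g r ^ 2) * (deriv w r / w r) - (m : ℝ) * h r)
        = -1) :
    ∀ r ∈ Set.Ioc (0:ℝ) R,
      deriv (deriv ψ) r - deriv ψ r * (deriv w r / w r) ≥ 0 := by
  intro r hr
  have hw := hwpos r hr
  have hg := hgpos r hr
  have hΛ := hΛpos r hr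
  have e1 := hL r hr
  have e2 := hψ' r hr
  have e3 := hbal r hr
  set I := ∫ t in (0:ℝ)..r, Λ t / g t with hI
  set A := deriv (deriv ψ) r
  set W' := deriv w r
  rw [e2] at e1 ⊢
  have hden : (0:ℝ) < g r ^ 2 * Λ r * w r := by positivity
  rw [ge_iff_le, ← mul_nonneg_iff_of_pos_right hden]
  have hwne : w r ≠ 0 := ne_of_gt hw
  have hgne : g r ≠ 0 := ne_of_gt hg
  have hΛne : Λ r ≠ 0 := ne_of_gt hΛ
  have hexp : (A - -(1 / (g r * Λ r)) * I * (W' / w r)) * (g r ^ 2 * Λ r * w r)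
      = A * (g r ^ 2 * Λ r * w r) + I * W' * g r := by
    field_simp
    ring
  rw [hexp]
  field_simp at e1
  nlinarith [e3, e1, hg, mul_pos hg hw, mul_pos (mul_pos hg hΛ) hw]
end

section
/- Let ξ be defined on [ρ,R] (0 < ρ < R) by ξ(r) = (∫_ρ^r dt/(g(t)Λ(t)))·(∫_ρ^R dt/(g(t)Λ(t)))^{−1}, where g, Λ are smooth positive on [ρ,R]. Then ξ(ρ)=0, ξ(R)=1, ξ' > 0, and ξ satisfies Lξ = 0 where Lf(r) = f''(r)g²(r) + f'(r)((m−g²(r))η_w(r) − m h(r)), provided Λ satisfies (Λwg)' = m(Λ/g)(w' − hw); moreover if h(r) ≤ η_w(r) on [ρ,R] then ξ''(r) − ξ'(r)η_w(r) ≤ 0. -/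
theorem cap_alg (G L W G' L' W' H C mm : ℝ) (hG : G ≠ 0) (hL : L ≠ 0) (hW : W ≠ 0)
    (E : (L' * W + L * W') * G + L * W * G' = mm * (L / G) * (W' - H * W)) :
    -(G' * L + G * L') / (G * L) ^ 2 * C⁻¹ * G ^ 2 +
      1 / (G * L) * C⁻¹ * ((mm - G ^ 2) * (W' / W) - mm * H) = 0 := by
  have E' : ((L' * W + L * W') * G + L * W * G') * G = mm * L * (W' - H * W) := by
    field_simp at E; linarith [E]
  have hX : -(G' * L + G * L') / (G * L) ^ 2 * G ^ 2 +
      1 / (G * L) * ((mm - G ^ 2) * (W' / W) - mm * H) = 0 := by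
    field_simp
    linear_combination (-1) * E'
  linear_combination C⁻¹ * hX


theorem capacity_potential (m : ℕ) (hm : 0 < m) (ρ R : ℝ) (hρ : 0 < ρ)
    (hρR : ρ < R) (w g h Λ : ℝ → ℝ)
    (hw : ContDiff ℝ (⊤ : ℕ∞) w) (hg : ContDiff ℝ (⊤ : ℕ∞) g) (hh : ContDiff ℝ (⊤ : ℕ∞) h)
    (hΛ : ContDiff ℝ (⊤ : ℕ∞) Λ)
    (hwpos : ∀ r ∈ Set.Icc ρ R, 0 < w r)
    (hgpos : ∀ r ∈ Set.Icc ρ R, 0 < g r)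
    (hΛpos : ∀ r ∈ Set.Icc ρ R, 0 < Λ r)
    (hode : ∀ r ∈ Set.Icc ρ R,
      deriv (fun t => Λ t * w t * g t) r =
        (m : ℝ) * (Λ r / g r) * (deriv w r - h r * w r)) :
    let ξ : ℝ → ℝ := fun r =>
      (∫ t in ρ..r, 1 / (g t * Λ t)) * (∫ t in ρ..R, 1 / (g t * Λ t))⁻¹
    ξ ρ = 0 ∧ ξ R = 1 ∧
      (∀ r ∈ Set.Icc ρ R, 0 < deriv ξ r) ∧
      (∀ r ∈ Set.Icc ρ R,
        deriv (deriv ξ) r * g r ^ 2 +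
            deriv ξ r * (((m : ℝ) - g r ^ 2) * (deriv w r / w r) - (m : ℝ) * h r)
          = 0) ∧
      ((∀ r ∈ Set.Icc ρ R, h r ≤ deriv w r / w r) →
        ∀ r ∈ Set.Icc ρ R,
          deriv (deriv ξ) r - deriv ξ r * (deriv w r / w r) ≤ 0) := by
  intro ξ
  set φ : ℝ → ℝ := fun t => 1 / (g t * Λ t) with hφdef
  set C : ℝ := ∫ t in ρ..R, φ t with hCdef
  have hgΛ : Continuous (fun x => g x * Λ x) := hg.continuous.mul hΛ.continuous
  have hKpos : ∀ r ∈ Set.Icc ρ R, 0 < g r * Λ r := fun r hr =>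
    mul_pos (hgpos r hr) (hΛpos r hr)
  -- open set of positivity
  have hopen : IsOpen {x : ℝ | 0 < g x * Λ x} := isOpen_lt continuous_const hgΛ
  obtain ⟨δ₁, hδ₁, hball₁⟩ := Metric.isOpen_iff.1 hopen ρ
    (hKpos ρ ⟨le_refl _, hρR.le⟩)
  obtain ⟨δ₂, hδ₂, hball₂⟩ := Metric.isOpen_iff.1 hopen R
    (hKpos R ⟨hρR.le, le_refl _⟩)
  set c : ℝ := min δ₁ δ₂ / 2 with hcdef
  have hc : 0 < c := by positivity
  have hc1 : c < δ₁ := lt_of_lt_of_le (by simpa using half_lt_self (lt_min hδ₁ hδ₂)) (min_le_left _ _)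
  have hc2 : c < δ₂ := lt_of_lt_of_le (by simpa using half_lt_self (lt_min hδ₁ hδ₂)) (min_le_right _ _)
  set a : ℝ := ρ - c with hadef
  set b : ℝ := R + c with hbdef
  have haρ : a < ρ := by simp [hadef]; linarith
  have hRb : R < b := by simp [hbdef]; linarith
  have hpos : ∀ x ∈ Set.Icc a b, 0 < g x * Λ x := by
    intro x hx
    obtain ⟨hxa, hxb⟩ := hx
    have hxa' : ρ - c ≤ x := hxa
    have hxb' : x ≤ R + c := hxb
    rcases lt_or_ge x ρ with hx1 | hx1
    · apply hball₁
      rw [Metric.mem_ball, Real.dist_eq, abs_of_nonpos (by linarith)]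
      linarith
    rcases le_or_gt x R with hx2 | hx2
    · exact hKpos x ⟨hx1, hx2⟩
    · apply hball₂
      rw [Metric.mem_ball, Real.dist_eq, abs_of_nonneg (by linarith)]
      linarith
  have hsub : Set.Icc ρ R ⊆ Set.Ioo a b := fun x hx => ⟨lt_of_lt_of_le haρ hx.1, lt_of_le_of_lt hx.2 hRb⟩
  have hab : a ≤ b := by linarith
  have hφcont : ContinuousOn φ (Set.Icc a b) := by
    apply ContinuousOn.div continuousOn_const hgΛ.continuousOn
    exact fun x hx => (hpos x hx).ne'
  have hmemIcc : ∀ x ∈ Set.Icc a b, x ∈ Set.Icc a b := fun x hx => hx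
  have hρmem : ρ ∈ Set.Icc a b := ⟨haρ.le, by nlinarith [hρR]⟩
  have hInt : ∀ r ∈ Set.Icc a b, IntervalIntegrable φ MeasureTheory.volume ρ r := by
    intro r hr
    apply (hφcont.mono ?_).intervalIntegrable
    rw [← Set.uIcc_of_le hab]
    exact Set.uIcc_subset_uIcc ((Set.uIcc_of_le hab).symm ▸ hρmem) ((Set.uIcc_of_le hab).symm ▸ hr)
  have hIccsub : Set.Icc ρ R ⊆ Set.Icc a b := fun x hx => ⟨by linarith [hx.1], by linarith [hx.2]⟩
  have hφcontAt : ∀ x ∈ Set.Icc a b, ContinuousAt φ x := by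
    intro x hx
    exact ContinuousAt.div continuousAt_const hgΛ.continuousAt (hpos x hx).ne'
  have hφmeas : Measurable φ := by
    simp only [hφdef, one_div]
    exact hgΛ.measurable.inv
  have hmeasφ : ∀ x : ℝ, StronglyMeasurableAtFilter φ (nhds x) MeasureTheory.volume :=
    fun x => hφmeas.stronglyMeasurable.stronglyMeasurableAtFilter
  have hRmem : R ∈ Set.Icc a b := ⟨by linarith, hRb.le⟩
  have hC : 0 < C := by
    apply intervalIntegral.intervalIntegral_pos_of_pos_on (hInt R hRmem) _ hρR
    intro x hx
    have : 0 < g x * Λ x := hKpos x ⟨hx.1.le, hx.2.le⟩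
    positivity
  have hD : ∀ r ∈ Set.Icc a b, HasDerivAt ξ (φ r * C⁻¹) r := by
    intro r hr
    have h1 : HasDerivAt (fun u => ∫ t in ρ..u, φ t) (φ r) r :=
      intervalIntegral.integral_hasDerivAt_right (hInt r hr) (hmeasφ r) (hφcontAt r hr)
    exact h1.mul_const C⁻¹
  have hd1 : ∀ r ∈ Set.Icc a b, deriv ξ r = φ r * C⁻¹ := fun r hr => (hD r hr).deriv
  have hEv : ∀ r ∈ Set.Icc ρ R, deriv (deriv ξ) r = deriv (fun x => φ x * C⁻¹) r := by
    intro r hr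
    apply Filter.EventuallyEq.deriv_eq
    have hmem : Set.Ioo a b ∈ nhds r := Ioo_mem_nhds (hsub hr).1 (hsub hr).2
    exact Filter.eventuallyEq_of_mem hmem (fun x hx => hd1 x ⟨hx.1.le, hx.2.le⟩)
  have hd2 : ∀ r ∈ Set.Icc ρ R, deriv (deriv ξ) r =
      -(deriv g r * Λ r + g r * deriv Λ r) / (g r * Λ r) ^ 2 * C⁻¹ := by
    intro r hr
    rw [hEv r hr]
    have hgd : HasDerivAt g (deriv g r) r := (hg.differentiable (by simp) r).hasDerivAt
    have hΛd : HasDerivAt Λ (deriv Λ r) r := (hΛ.differentiable (by simp) r).hasDerivAt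
    have hinv := ((hgd.mul hΛd).inv (hKpos r hr).ne').mul_const C⁻¹
    have heq : (fun x => φ x * C⁻¹) = fun x => (g x * Λ x)⁻¹ * C⁻¹ := by
      funext x; simp [hφdef, one_div]
    rw [heq]
    exact hinv.deriv
  -- product rule for Λ w g
  have hLWG : ∀ r ∈ Set.Icc ρ R, deriv (fun t => Λ t * w t * g t) r =
      (deriv Λ r * w r + Λ r * deriv w r) * g r + Λ r * w r * deriv g r := by
    intro r _
    have hgd : HasDerivAt g (deriv g r) r := (hg.differentiable (by simp) r).hasDerivAt
    have hΛd : HasDerivAt Λ (deriv Λ r) r := (hΛ.differentiable (by simp) r).hasDerivAt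
    have hwd : HasDerivAt w (deriv w r) r := (hw.differentiable (by simp) r).hasDerivAt
    exact ((hΛd.mul hwd).mul hgd).deriv
  have hODE : ∀ r ∈ Set.Icc ρ R,
      deriv (deriv ξ) r * g r ^ 2 +
        deriv ξ r * (((m : ℝ) - g r ^ 2) * (deriv w r / w r) - (m : ℝ) * h r) = 0 := by
    intro r hr
    rw [hd1 r (hIccsub hr), hd2 r hr]
    have hodeR := hode r hr
    rw [hLWG r hr] at hodeR
    have hG : g r ≠ 0 := (hgpos r hr).ne'
    have hL : Λ r ≠ 0 := (hΛpos r hr).ne'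
    have hW : w r ≠ 0 := (hwpos r hr).ne'
    simp only [hφdef]
    exact cap_alg (g r) (Λ r) (w r) (deriv g r) (deriv Λ r) (deriv w r) (h r) C (m : ℝ)
      hG hL hW hodeR
  refine ⟨?_, ?_, ?_, ?_, ?_⟩
  · show (∫ t in ρ..ρ, (1:ℝ) / (g t * Λ t)) * _ = 0
    simp
  · show (∫ t in ρ..R, (1:ℝ) / (g t * Λ t)) * (∫ t in ρ..R, (1:ℝ) / (g t * Λ t))⁻¹ = 1
    exact mul_inv_cancel₀ (by exact_mod_cast hC.ne')
  · intro r hr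
    rw [hd1 r (hIccsub hr)]
    have h1 : 0 < g r * Λ r := hKpos r hr
    have : 0 < φ r := by simp only [hφdef]; positivity
    positivity
  · exact hODE
  · intro hη r hr
    have hodeR := hODE r hr
    have hG2 : 0 < g r ^ 2 := pow_pos (hgpos r hr) 2
    have hd1r : 0 < deriv ξ r := by
      rw [hd1 r (hIccsub hr)]
      have h1 : 0 < g r * Λ r := hKpos r hr
      have : 0 < φ r := by simp only [hφdef]; positivity
      positivity
    have hkey : (deriv (deriv ξ) r - deriv ξ r * (deriv w r / w r)) * g r ^ 2 ≤ 0 := by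
      have h2 : 0 ≤ (m : ℝ) * deriv ξ r * (deriv w r / w r - h r) := by
        apply mul_nonneg (mul_nonneg (Nat.cast_nonneg m) hd1r.le)
        linarith [hη r hr]
      nlinarith [hodeR]
    exact le_of_mul_le_mul_right (by linarith) hG2
end

section
/- Fix b < 0, integer m ≥ 2, and C with 0 ≤ m(√(−b) − C) ≤ √(−b). Then for all sufficiently large r > 1, the function g̃(r) = √( m r log(r)(√(−b)cosh(τ) − C sinh(τ)) / (sinh(τ)log(r) + τ cosh(τ)log(r) + sinh(τ)) ), with τ = r√(−b), is well-defined (the expression under the root is nonnegative) and satisfies 0 < g̃(r) ≤ 1. -/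
set_option maxHeartbeats 1000000


theorem corBparab_gtilde_wellDefined (b C : ℝ) (m : ℕ) (hb : b < 0) (hm : 2 ≤ m)
    (h1 : 0 ≤ (m : ℝ) * (Real.sqrt (-b) - C))
    (h2 : (m : ℝ) * (Real.sqrt (-b) - C) ≤ Real.sqrt (-b)) :
    ∃ r₀ : ℝ, 1 < r₀ ∧ ∀ r ≥ r₀,
      0 ≤ (m : ℝ) * r * Real.log r *
            (Real.sqrt (-b) * Real.cosh (r * Real.sqrt (-b)) -
              C * Real.sinh (r * Real.sqrt (-b))) /
          (Real.sinh (r * Real.sqrt (-b)) * Real.log r +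
            (r * Real.sqrt (-b)) * Real.cosh (r * Real.sqrt (-b)) * Real.log r +
            Real.sinh (r * Real.sqrt (-b))) ∧
        0 < Real.sqrt ((m : ℝ) * r * Real.log r *
            (Real.sqrt (-b) * Real.cosh (r * Real.sqrt (-b)) -
              C * Real.sinh (r * Real.sqrt (-b))) /
          (Real.sinh (r * Real.sqrt (-b)) * Real.log r +
            (r * Real.sqrt (-b)) * Real.cosh (r * Real.sqrt (-b)) * Real.log r +
            Real.sinh (r * Real.sqrt (-b)))) ∧
        Real.sqrt ((m : ℝ) * r * Real.log r *
            (Real.sqrt (-b) * Real.cosh (r * Real.sqrt (-b)) -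
              C * Real.sinh (r * Real.sqrt (-b))) /
          (Real.sinh (r * Real.sqrt (-b)) * Real.log r +
            (r * Real.sqrt (-b)) * Real.cosh (r * Real.sqrt (-b)) * Real.log r +
            Real.sinh (r * Real.sqrt (-b)))) ≤ 1 := by
  set s := Real.sqrt (-b) with hs_def
  have hs : 0 < s := Real.sqrt_pos.mpr (by linarith)
  have hm' : (2 : ℝ) ≤ (m : ℝ) := by exact_mod_cast hm
  have hmpos : (0 : ℝ) < (m : ℝ) := by linarith
  -- C ≤ s and (m-1) s ≤ m C
  have hC1 : C ≤ s := by nlinarith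
  have hC2 : ((m : ℝ) - 1) * s ≤ (m : ℝ) * C := by nlinarith
  refine ⟨max 2 ((Real.log m + 1) / s), by norm_num, fun r hr => ?_⟩
  have hr2 : (2 : ℝ) ≤ r := le_trans (le_max_left _ _) hr
  have hr1 : (1 : ℝ) < r := by linarith
  have hlog : 0 < Real.log r := Real.log_pos hr1
  set τ := r * s with hτ_def
  have hτ : 0 < τ := by positivity
  have hτlog : Real.log (m : ℝ) + 1 ≤ τ := by
    have := le_trans (le_max_right 2 ((Real.log m + 1) / s)) hr
    calc Real.log (m : ℝ) + 1 = ((Real.log m + 1) / s) * s := by field_simp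
    _ ≤ r * s := by nlinarith
  have hsinh : 0 < Real.sinh τ := Real.sinh_pos_iff.mpr hτ
  have hcosh : 0 < Real.cosh τ := Real.cosh_pos τ
  have hsinhτ : τ < Real.sinh τ := Real.self_lt_sinh_iff.mpr hτ
  have hexp : Real.cosh τ - Real.sinh τ = Real.exp (-τ) := Real.cosh_sub_sinh τ
  have hexp_pos : 0 < Real.exp (-τ) := Real.exp_pos _
  -- exp(-τ) ≤ 1/m
  have hexp_le : (m : ℝ) * Real.exp (-τ) ≤ 1 := by
    have h3 : Real.exp (-τ) ≤ Real.exp (-(Real.log m)) := by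
      apply Real.exp_le_exp.mpr; linarith
    have h4 : Real.exp (-(Real.log m)) = 1 / (m : ℝ) := by
      rw [Real.exp_neg, Real.exp_log hmpos, one_div]
    rw [h4] at h3
    calc (m : ℝ) * Real.exp (-τ) ≤ (m : ℝ) * (1 / m) :=
          mul_le_mul_of_nonneg_left h3 (le_of_lt hmpos)
      _ = 1 := by field_simp
  -- numerator factor positive
  have hnum : 0 < s * Real.cosh τ - C * Real.sinh τ := by
    have : s * Real.cosh τ - C * Real.sinh τ ≥ s * (Real.cosh τ - Real.sinh τ) := by
      nlinarith
    nlinarith [mul_pos hs hexp_pos]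
  -- denominator positive
  have hden : 0 < Real.sinh τ * Real.log r + τ * Real.cosh τ * Real.log r + Real.sinh τ := by
    positivity
  have hNpos : 0 < (m : ℝ) * r * Real.log r * (s * Real.cosh τ - C * Real.sinh τ) := by
    have hr0 : 0 < r := by linarith
    positivity
  have hquot_pos : 0 < (m : ℝ) * r * Real.log r * (s * Real.cosh τ - C * Real.sinh τ) /
      (Real.sinh τ * Real.log r + τ * Real.cosh τ * Real.log r + Real.sinh τ) :=
    div_pos hNpos hden
  -- N ≤ D
  have hkey : (m : ℝ) * r * Real.log r * (s * Real.cosh τ - C * Real.sinh τ) ≤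
      Real.sinh τ * Real.log r + τ * Real.cosh τ * Real.log r + Real.sinh τ := by
    have hr0 : (0 : ℝ) < r := by linarith
    -- m * (s cosh - C sinh) ≤ s cosh + (m-1) s exp(-τ)
    have hid : ((m : ℝ) - 1) * s * (Real.cosh τ - Real.sinh τ) =
        ((m : ℝ) - 1) * s * Real.exp (-τ) := by rw [hexp]
    have step1 : (m : ℝ) * (s * Real.cosh τ - C * Real.sinh τ) ≤
        s * Real.cosh τ + ((m : ℝ) - 1) * s * Real.exp (-τ) := by
      nlinarith [mul_le_mul_of_nonneg_right hC2 (le_of_lt hsinh), hid]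
    -- ((m-1)) * τ * exp(-τ) ≤ sinh τ
    have step2 : ((m : ℝ) - 1) * τ * Real.exp (-τ) ≤ Real.sinh τ := by
      nlinarith [mul_le_mul_of_nonneg_right hexp_le (le_of_lt hτ)]
    -- combine
    have step3 : (m : ℝ) * r * Real.log r * (s * Real.cosh τ - C * Real.sinh τ) ≤
        r * Real.log r * (s * Real.cosh τ + ((m : ℝ) - 1) * s * Real.exp (-τ)) := by
      calc (m : ℝ) * r * Real.log r * (s * Real.cosh τ - C * Real.sinh τ)
          = (r * Real.log r) * ((m : ℝ) * (s * Real.cosh τ - C * Real.sinh τ)) := by ring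
        _ ≤ (r * Real.log r) * (s * Real.cosh τ + ((m : ℝ) - 1) * s * Real.exp (-τ)) :=
            mul_le_mul_of_nonneg_left step1 (by positivity)
        _ = r * Real.log r * (s * Real.cosh τ + ((m : ℝ) - 1) * s * Real.exp (-τ)) := by ring
    have step4 : r * Real.log r * (s * Real.cosh τ + ((m : ℝ) - 1) * s * Real.exp (-τ))
        = τ * Real.cosh τ * Real.log r + ((m : ℝ) - 1) * τ * Real.exp (-τ) * Real.log r := by
      rw [hτ_def]; ring
    have step5 : ((m : ℝ) - 1) * τ * Real.exp (-τ) * Real.log r ≤ Real.sinh τ * Real.log r :=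
      mul_le_mul_of_nonneg_right step2 (le_of_lt hlog)
    calc (m : ℝ) * r * Real.log r * (s * Real.cosh τ - C * Real.sinh τ)
        ≤ τ * Real.cosh τ * Real.log r + ((m : ℝ) - 1) * τ * Real.exp (-τ) * Real.log r := by
          rw [← step4]; exact step3
      _ ≤ τ * Real.cosh τ * Real.log r + Real.sinh τ * Real.log r := by linarith
      _ ≤ Real.sinh τ * Real.log r + τ * Real.cosh τ * Real.log r + Real.sinh τ := by
          linarith
  have hquot_le : (m : ℝ) * r * Real.log r * (s * Real.cosh τ - C * Real.sinh τ) /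
      (Real.sinh τ * Real.log r + τ * Real.cosh τ * Real.log r + Real.sinh τ) ≤ 1 :=
    (div_le_one hden).mpr hkey
  exact ⟨le_of_lt hquot_pos, Real.sqrt_pos.mpr hquot_pos,
    Real.sqrt_le_one.mpr hquot_le⟩
end

section
/- For the paraboloid profile x(u) = u, z(u) = αu² (α ∈ ℝ, α ≠ 0), the tangency function T(u) = (1 + 2α²u²)/(√(4α²u²+1)·√(1+α²u²)) satisfies T(u)² ≥ log(r(u)²)/(log(r(u)²) + 1) for all sufficiently large u, where r(u) = u√(1+α²u²). -/
theorem paraboloid_tangency (α : ℝ) (hα : α ≠ 0) :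
    ∃ U : ℝ, ∀ u ≥ U,
      ((1 + 2 * α ^ 2 * u ^ 2) /
          (Real.sqrt (4 * α ^ 2 * u ^ 2 + 1) * Real.sqrt (1 + α ^ 2 * u ^ 2))) ^ 2 ≥
        Real.log ((u * Real.sqrt (1 + α ^ 2 * u ^ 2)) ^ 2) /
          (Real.log ((u * Real.sqrt (1 + α ^ 2 * u ^ 2)) ^ 2) + 1) := by
  have hα2 : (0:ℝ) < α ^ 2 := by positivity
  refine ⟨max 1 (2 / (3 * α ^ 2)), fun u hu => ?_⟩
  have hu1 : (1:ℝ) ≤ u := le_trans (le_max_left _ _) hu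
  have hu0 : (0:ℝ) < u := lt_of_lt_of_le one_pos hu1
  have hu2 : 2 / (3 * α ^ 2) ≤ u := le_trans (le_max_right _ _) hu
  set s : ℝ := α ^ 2 * u ^ 2 with hs
  have hspos : 0 < s := by positivity
  have h1s : (0:ℝ) < 1 + s := by linarith
  have h4s : (0:ℝ) < 4 * s + 1 := by linarith
  -- u ≥ 2/(3α²) gives 2u ≤ 3s
  have h2u3s : 2 * u ≤ 3 * s := by
    have h3 : (0:ℝ) < 3 * α ^ 2 := by positivity
    have := (div_le_iff₀ h3).mp hu2
    nlinarith
  set L : ℝ := Real.log ((u * Real.sqrt (1 + s)) ^ 2) with hL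
  have hr2 : (u * Real.sqrt (1 + s)) ^ 2 = u ^ 2 * (1 + s) := by
    rw [mul_pow, Real.sq_sqrt h1s.le]
  have hLval : L = Real.log (u ^ 2) + Real.log (1 + s) := by
    rw [hL, hr2, Real.log_mul (by positivity) (by positivity)]
  have hLub : L ≤ 2 * u + s := by
    have h1 : Real.log (u ^ 2) ≤ u ^ 2 - 1 := Real.log_le_sub_one_of_pos (by positivity)
    have h2 : Real.log (1 + s) ≤ (1 + s) - 1 := Real.log_le_sub_one_of_pos h1s
    have h3 : u ^ 2 - 1 ≤ 2 * u - 1 + (u - 1) ^ 2 := by ring_nf; nlinarith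
    have h4 : Real.log (u ^ 2) = 2 * Real.log u := by
      rw [Real.log_pow]; push_cast; ring
    have h5 : Real.log u ≤ u - 1 := Real.log_le_sub_one_of_pos hu0
    rw [hLval, h4]; linarith
  have hLnn : 0 ≤ L := by
    rw [hL, hr2]
    apply Real.log_nonneg
    nlinarith
  have hL1 : (0:ℝ) < L + 1 := by linarith
  -- rewrite LHS square
  have hsq : ((1 + 2 * s) / (Real.sqrt (4 * s + 1) * Real.sqrt (1 + s))) ^ 2
      = (1 + 2 * s) ^ 2 / ((4 * s + 1) * (1 + s)) := by
    rw [div_pow, mul_pow, Real.sq_sqrt h4s.le, Real.sq_sqrt h1s.le]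
  have hkey : L / (L + 1) ≤ (1 + 2 * s) ^ 2 / ((4 * s + 1) * (1 + s)) := by
    rw [div_le_div_iff₀ hL1 (by positivity)]
    have hsL : s * L ≤ 4 * s ^ 2 := by
      have : L ≤ 4 * s := by linarith
      nlinarith
    nlinarith
  have h41 : 4 * α ^ 2 * u ^ 2 + 1 = 4 * s + 1 := by rw [hs]; ring
  have h12 : 1 + 2 * α ^ 2 * u ^ 2 = 1 + 2 * s := by rw [hs]; ring
  rw [ge_iff_le, h41, h12, hsq]
  exact hkey
end
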